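/- Let S_down and S_up be two finite point sets in the plane, with S_down ∪ S_up in general position, such that |S_down| ≤ |S_up| ≤ |S_down| + 1 and there is a line separating S_down from S_up. Let z ∈ S_up be a vertex of the boundary of the convex hull of S_down ∪ S_up that is adjacent on that boundary to a vertex from S_down. Then there exists a plane Hamiltonian path on S_down ∪ S_up starting at z such that every edge of the path has one endpoint in S_down and one endpoint in S_up. -/

import Mathlib

/-!
Induction on `|S_down| + |S_up|`, exchanging the roles of the two sides at each step. Every pair
`(d, u) ∈ S_down × S_up` crosses the separating line `ℓ`, and since `zw` is a hull edge, its
crossing is extreme on `ℓ`. Among the pairs with `u ≠ z` take the one whose crossing is nearest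
to that of `zw`: the line `du` then has `z` strictly on one side and every other point strictly on
the other. So `du` is a hull edge of the remaining points, induction gives a path from `d`, and
prepending the edge `zd` creates no crossing since `zd` lies on the far side of the line `du`.
-/

open Set
open scoped Classical

noncomputable section

/-- Points in the plane. -/
abbrev Pt : Type := ℝ × ℝ

/-- Orientation determinant of the triple `(a, b, p)`:
positive iff `p` lies strictly to the left of the directed line from `a` to `b`. -/
def det3 (a b p : Pt) : ℝ :=
  (b.1 - a.1) * (p.2 - a.2) - (b.2 - a.2) * (p.1 - a.1)

/-- A finite point set is in general position if no three of its points are collinear. -/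
def GenPos (S : Finset Pt) : Prop :=
  ∀ p ∈ S, ∀ q ∈ S, ∀ r ∈ S,
    p ≠ q → p ≠ r → q ≠ r → ¬ Collinear ℝ ({p, q, r} : Set Pt)

/-- The list of (directed) edges of a polygonal path given by its list of vertices. -/
def edgeList (l : List Pt) : List (Pt × Pt) := l.zip l.tail

/-- The segment `ab` is an edge of the path `l`, i.e. `a` and `b` are consecutive on `l`. -/
def IsEdgeOf (a b : Pt) (l : List Pt) : Prop :=
  (a, b) ∈ edgeList l ∨ (b, a) ∈ edgeList l

/-- `l` is a plane (crossing-free) Hamiltonian path on the point set `S`: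
its vertices are exactly the points of `S`, each visited once, and any two distinct
edges intersect only in common endpoints. -/
def PlanePath (S : Finset Pt) (l : List Pt) : Prop :=
  l.Nodup ∧ l.toFinset = S ∧
  ∀ e ∈ edgeList l, ∀ f ∈ edgeList l, e ≠ f →
    segment ℝ e.1 e.2 ∩ segment ℝ f.1 f.2 ⊆
      (({e.1, e.2} : Set Pt) ∩ ({f.1, f.2} : Set Pt))

/-- Two paths are edge-disjoint: no segment is an edge of both. -/
def EdgeDisjoint (l₁ l₂ : List Pt) : Prop :=
  ∀ x y : Pt, IsEdgeOf x y l₁ → ¬ IsEdgeOf x y l₂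

/-- `p` is a vertex of the boundary of the convex hull of `S`. -/
def HullVertex (S : Finset Pt) (p : Pt) : Prop :=
  p ∈ Set.extremePoints ℝ (convexHull ℝ (S : Set Pt))

/-- `ab` is an edge of the boundary of the convex hull of `S`, i.e. `a` and `b` are
consecutive hull vertices: all other points of `S` lie strictly on one side of line `ab`. -/
def IsHullEdge (S : Finset Pt) (a b : Pt) : Prop :=
  a ∈ S ∧ b ∈ S ∧ a ≠ b ∧
  ((∀ p ∈ S, p ≠ a → p ≠ b → 0 < det3 a b p) ∨
   (∀ p ∈ S, p ≠ a → p ≠ b → det3 a b p < 0))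

/-- The segment `xy` is a bridge over the line through `a` and `b`:
it crosses the line `ℓ(ab)` but not the segment `ab`. -/
def IsBridge (a b x y : Pt) : Prop :=
  det3 a b x * det3 a b y < 0 ∧ segment ℝ x y ∩ segment ℝ a b = ∅

/-- The set of common edges of the two paths is exactly the segment `ab`. -/
def SharesExactly (a b : Pt) (l₁ l₂ : List Pt) : Prop :=
  IsEdgeOf a b l₁ ∧ IsEdgeOf a b l₂ ∧
  ∀ x y : Pt, IsEdgeOf x y l₁ → IsEdgeOf x y l₂ → ({x, y} : Set Pt) = ({a, b} : Set Pt)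

@[simp] lemma det3_self_left (a b : Pt) : det3 a b a = 0 := by simp only [det3]; ring

@[simp] lemma det3_self_right (a b : Pt) : det3 a b b = 0 := by simp only [det3]; ring

lemma det3_add_smul {α β : ℝ} (hαβ : α + β = 1) (a b x y : Pt) :
    det3 a b (α • x + β • y) = α * det3 a b x + β * det3 a b y := by
  obtain rfl : β = 1 - α := by linarith
  simp only [det3, Prod.fst_add, Prod.snd_add, Prod.smul_fst, Prod.smul_snd, smul_eq_mul]
  ring

lemma collinear_of_det3_eq_zero {p q r : Pt} (h : det3 p q r = 0) :
    Collinear ℝ ({p, q, r} : Set Pt) := by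
  rcases eq_or_ne p q with rfl | hpq
  · simpa using collinear_pair ℝ p r
  obtain ⟨a, b, x, y, hq, hr⟩ : ∃ a b x y : ℝ, q = p + (a, b) ∧ r = p + (x, y) :=
    ⟨q.1 - p.1, q.2 - p.2, r.1 - p.1, r.2 - p.2, by ext <;> simp, by ext <;> simp⟩
  subst hq hr
  have hab : a ^ 2 + b ^ 2 ≠ 0 := by
    intro h0
    have ha : a = 0 := by nlinarith
    have hb : b = 0 := by nlinarith
    simp [ha, hb] at hpq
  have hdet : a * y - b * x = 0 := by simpa [det3] using h
  -- `(x, y)` is its own orthogonal projection onto the direction `(a, b)`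
  have hr : AffineMap.lineMap p (p + (a, b)) ((a * x + b * y) / (a ^ 2 + b ^ 2)) = p + (x, y) := by
    rw [AffineMap.lineMap_apply, vsub_eq_sub, add_sub_cancel_left, vadd_eq_add, add_comm]
    congr 1
    ext <;> simp only [Prod.smul_fst, Prod.smul_snd, smul_eq_mul] <;> field_simp
    · linear_combination b * hdet
    · linear_combination -a * hdet
  have := collinear_insert_of_mem_affineSpan_pair (hr ▸ AffineMap.lineMap_mem_affineSpan_pair _ _ _)
  rwa [Set.insert_comm, Set.pair_comm] at this

lemma GenPos.mono {S T : Finset Pt} (hS : GenPos S) (hTS : T ⊆ S) : GenPos T :=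
  fun p hp q hq r hr => hS p (hTS hp) q (hTS hq) r (hTS hr)

lemma GenPos.det3_ne_zero {S : Finset Pt} (hS : GenPos S) {p q r : Pt} (hp : p ∈ S) (hq : q ∈ S)
    (hr : r ∈ S) (hpq : p ≠ q) (hpr : p ≠ r) (hqr : q ≠ r) : det3 p q r ≠ 0 :=
  fun h => hS p hp q hq r hr hpq hpr hqr (collinear_of_det3_eq_zero h)

section Crossing

variable (f : Pt →ₗ[ℝ] ℝ) (c : ℝ)

/-- The point where the line `ab` meets the level line `f = c`. -/
def crossing (a b : Pt) : Pt :=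
  ((f b - c) / (f b - f a)) • a + ((c - f a) / (f b - f a)) • b

/-- A coordinate along the level lines of `f`. -/
def levelCoord (p : Pt) : ℝ := f (-p.2, p.1)

variable {f c}

lemma apply_eq_coords (p : Pt) : f p = f (1, 0) * p.1 + f (0, 1) * p.2 := by
  conv_lhs => rw [show p = p.1 • ((1 : ℝ), (0 : ℝ)) + p.2 • ((0 : ℝ), (1 : ℝ)) by ext <;> simp]
  rw [map_add, map_smul, map_smul, smul_eq_mul, smul_eq_mul]
  ring

lemma apply_crossing {a b : Pt} (h : f a ≠ f b) : f (crossing f c a b) = c := by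
  have : f b - f a ≠ 0 := sub_ne_zero.mpr h.symm
  simp only [crossing, map_add, map_smul, smul_eq_mul]
  field_simp
  ring

lemma det3_crossing {a b : Pt} (h : f a ≠ f b) (x y : Pt) :
    (f b - f a) * det3 x y (crossing f c a b) =
      (f b - c) * det3 x y a + (c - f a) * det3 x y b := by
  have : f b - f a ≠ 0 := sub_ne_zero.mpr h.symm
  rw [crossing, det3_add_smul (by field_simp; ring)]
  field_simp

lemma crossing_comm (a b : Pt) : crossing f c a b = crossing f c b a := by
  rcases eq_or_ne (f a) (f b) with h | h
  · simp [crossing, h]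
  · have : f b - f a ≠ 0 := sub_ne_zero.mpr h.symm
    have : f a - f b ≠ 0 := sub_ne_zero.mpr h
    simp only [crossing]
    rw [add_comm]
    congr 2 <;> field_simp <;> ring

lemma det3_crossing_self {a b : Pt} (h : f a ≠ f b) : det3 a b (crossing f c a b) = 0 := by
  have := det3_crossing (c := c) h a b
  simp only [det3_self_left, det3_self_right, mul_zero, add_zero] at this
  exact (mul_eq_zero.mp this).resolve_left (sub_ne_zero.mpr h.symm)

lemma sq_add_sq_pos {a b : Pt} (h : f a ≠ f b) : 0 < f (1, 0) ^ 2 + f (0, 1) ^ 2 := by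
  by_contra! h0
  have h1 : f (1, 0) = 0 := by nlinarith
  have h2 : f (0, 1) = 0 := by nlinarith
  exact h (by rw [apply_eq_coords a, apply_eq_coords b, h1, h2]; ring)

/-- On the level line `f = c`, the side of a line `xy` crossing it is read off from `levelCoord`. -/
lemma sq_add_sq_mul_det3 {x y P : Pt} (hxy : f x ≠ f y) (hP : f P = c) :
    (f (1, 0) ^ 2 + f (0, 1) ^ 2) * det3 x y P =
      (levelCoord f P - levelCoord f (crossing f c x y)) * (f x - f y) := by
  have hY := det3_crossing_self (c := c) hxy
  have hfY := apply_crossing (c := c) hxy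
  set Y := crossing f c x y
  set A := f (1, 0)
  set B := f (0, 1)
  have hf (p : Pt) : f p = A * p.1 + B * p.2 := apply_eq_coords p
  simp only [levelCoord, det3] at hY ⊢
  rw [hf, hf, hf x, hf y]
  rw [hf] at hP hfY
  linear_combination (A ^ 2 + B ^ 2) * hY + (B * (y.1 - x.1) - A * (y.2 - x.2)) * (hP - hfY)

end Crossing

section Bridge

variable {f : Pt →ₗ[ℝ] ℝ} {c : ℝ} {D U : Finset Pt}

lemma levelCoord_crossing_lt (hD : ∀ p ∈ D, f p < c) (hU : ∀ q ∈ U, c < f q)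
    {z w : Pt} (hz : z ∈ U) (hw : w ∈ D) {ε : ℝ}
    (hε : ∀ p ∈ D ∪ U, p ≠ z → p ≠ w → 0 < ε * det3 z w p)
    {d u : Pt} (hd : d ∈ D) (hu : u ∈ U) (huz : u ≠ z) :
    ε * levelCoord f (crossing f c w z) < ε * levelCoord f (crossing f c d u) := by
  have hdc := hD d hd
  have huc := hU u hu
  have hwz : f w < f z := (hD w hw).trans (hU z hz)
  have hdet_d : 0 ≤ ε * det3 z w d := by
    rcases eq_or_ne d w with rfl | hdw
    · simp
    · exact (hε d (Finset.mem_union_left _ hd) (by rintro rfl; linarith [hU d hz]) hdw).le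
  have hdet_u : 0 < ε * det3 z w u :=
    hε u (Finset.mem_union_right _ hu) huz (by rintro rfl; linarith [hD u hw])
  have hdu : f d ≠ f u := by linarith
  have hX : 0 < ε * det3 z w (crossing f c d u) := by
    have hcomb : (f u - f d) * (ε * det3 z w (crossing f c d u)) =
        (f u - c) * (ε * det3 z w d) + (c - f d) * (ε * det3 z w u) := by
      linear_combination ε * det3_crossing (c := c) hdu z w
    refine pos_of_mul_pos_right (a := f u - f d) ?_ (by linarith)
    rw [hcomb]
    exact add_pos_of_nonneg_of_pos (mul_nonneg (by linarith) hdet_d) (mul_pos (by linarith) hdet_u)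
  have key := sq_add_sq_mul_det3 (c := c) (P := crossing f c d u) hwz.ne' (apply_crossing hdu)
  rw [crossing_comm z w] at key
  have hN := sq_add_sq_pos hwz.ne
  have h : 0 < (ε * levelCoord f (crossing f c d u) - ε * levelCoord f (crossing f c w z)) *
      (f z - f w) := by
    linear_combination ε * key + mul_pos hN hX
  linarith [pos_of_mul_pos_left h (by linarith)]

lemma opposite_sides_of_crossings (hD : ∀ p ∈ D, f p < c) (hU : ∀ q ∈ U, c < f q)
    (hgp : GenPos (D ∪ U)) {z w d u : Pt} (hz : z ∈ U) (hw : w ∈ D) (hd : d ∈ D) (hu : u ∈ U)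
    (huz : u ≠ z) {κ : ℝ} (hcross : ∀ a ∈ D, ∀ b ∈ U, b ≠ z → 0 ≤ κ * det3 d u (crossing f c a b))
    (hcross_wz : κ * det3 d u (crossing f c w z) < 0) :
    det3 d u z ≠ 0 ∧ ∀ p ∈ D ∪ U, p ≠ z → p ≠ d → p ≠ u → det3 d u z * det3 d u p < 0 := by
  have hcomb {a b : Pt} (ha : a ∈ D) (hb : b ∈ U) :
      (f b - f a) * (κ * det3 d u (crossing f c a b)) =
        (f b - c) * (κ * det3 d u a) + (c - f a) * (κ * det3 d u b) := by
    linear_combination κ * det3_crossing (c := c) (by linarith [hD a ha, hU b hb] : f a ≠ f b) d u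
  have hκ : κ ≠ 0 := by rintro rfl; simp at hcross_wz
  have hpos (p : Pt) (hp : p ∈ D ∪ U) (hpz : p ≠ z) (hpd : p ≠ d) (hpu : p ≠ u) :
      0 < κ * det3 d u p := by
    have hdu : d ≠ u := by rintro rfl; linarith [hD d hd, hU d hu]
    have hdet := hgp.det3_ne_zero (Finset.mem_union_left _ hd) (Finset.mem_union_right _ hu) hp
      hdu (Ne.symm hpd) (Ne.symm hpu)
    refine lt_of_le_of_ne ?_ (mul_ne_zero hκ hdet).symm
    rcases Finset.mem_union.mp hp with hpD | hpU
    · have h := hcomb hpD hu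
      rw [det3_self_right, mul_zero, mul_zero, add_zero] at h
      nlinarith [hD p hpD, hU u hu, hcross p hpD u hu huz]
    · have h := hcomb hd hpU
      rw [det3_self_left, mul_zero, mul_zero, zero_add] at h
      nlinarith [hD d hd, hU p hpU, hcross d hd p hpU hpz]
  have hw0 : 0 ≤ κ * det3 d u w := by
    rcases eq_or_ne w d with rfl | hwd
    · simp
    · exact (hpos w (Finset.mem_union_left _ hw) (by rintro rfl; linarith [hD w hw, hU w hz]) hwd
        (by rintro rfl; linarith [hD w hw, hU w hu])).le
  have hz_neg : κ * det3 d u z < 0 := by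
    nlinarith [hcomb hw hz, hD w hw, hU z hz]
  refine ⟨fun h => by simp [h] at hz_neg, fun p hp hpz hpd hpu => ?_⟩
  have h := mul_neg_of_neg_of_pos hz_neg (hpos p hp hpz hpd hpu)
  by_contra! h'
  nlinarith [mul_nonneg (mul_self_nonneg κ) h']

theorem exists_line_isolating_of_isHullEdge (hD : ∀ p ∈ D, f p < c) (hU : ∀ q ∈ U, c < f q)
    (hgp : GenPos (D ∪ U)) {z w : Pt} (hz : z ∈ U) (hw : w ∈ D) (hzw : IsHullEdge (D ∪ U) z w)
    (hU' : (U.erase z).Nonempty) :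
    ∃ d ∈ D, ∃ u ∈ U.erase z, det3 d u z ≠ 0 ∧
      ∀ p ∈ D ∪ U, p ≠ z → p ≠ d → p ≠ u → det3 d u z * det3 d u p < 0 := by
  obtain ⟨ε, hε⟩ : ∃ ε : ℝ, ∀ p ∈ D ∪ U, p ≠ z → p ≠ w → 0 < ε * det3 z w p := by
    rcases hzw.2.2.2 with h | h
    · exact ⟨1, by simpa using h⟩
    · exact ⟨-1, by simpa using h⟩
  obtain ⟨⟨d, u⟩, hdu, hmin⟩ := (D ×ˢ U.erase z).exists_min_image
    (fun q => ε * levelCoord f (crossing f c q.1 q.2)) (Finset.Nonempty.product ⟨w, hw⟩ hU')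
  obtain ⟨hd, hu'⟩ : d ∈ D ∧ u ∈ U.erase z := Finset.mem_product.mp hdu
  obtain ⟨huz, hu⟩ := Finset.mem_erase.mp hu'
  have hfdu : f d ≠ f u := by linarith [hD d hd, hU u hu]
  set κ := ε * (f d - f u)
  have hN := sq_add_sq_pos hfdu
  have hside (P : Pt) (hP : f P = c) :
      (f (1, 0) ^ 2 + f (0, 1) ^ 2) * (κ * det3 d u P) = (f d - f u) ^ 2 *
        (ε * levelCoord f P - ε * levelCoord f (crossing f c d u)) := by
    linear_combination κ * sq_add_sq_mul_det3 hfdu hP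
  have hcross (a : Pt) (ha : a ∈ D) (b : Pt) (hb : b ∈ U) (hbz : b ≠ z) :
      0 ≤ κ * det3 d u (crossing f c a b) := by
    have hab : f a ≠ f b := by linarith [hD a ha, hU b hb]
    have := hside _ (apply_crossing hab)
    have := hmin (a, b) (Finset.mem_product.mpr ⟨ha, Finset.mem_erase.mpr ⟨hbz, hb⟩⟩)
    nlinarith [sq_nonneg (f d - f u)]
  have hcross_wz : κ * det3 d u (crossing f c w z) < 0 := by
    have hwz : f w ≠ f z := by linarith [hD w hw, hU z hz]
    have := hside _ (apply_crossing hwz)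
    have := levelCoord_crossing_lt hD hU hz hw hε hd hu huz
    have : 0 < (f d - f u) ^ 2 := by positivity
    nlinarith
  exact ⟨d, hd, u, hu', opposite_sides_of_crossings hD hU hgp hz hw hd hu huz hcross hcross_wz⟩

end Bridge

@[simp] lemma edgeList_cons_cons (a b : Pt) (l : List Pt) :
    edgeList (a :: b :: l) = (a, b) :: edgeList (b :: l) := rfl

lemma mem_of_mem_edgeList {l : List Pt} {x y : Pt} (h : (x, y) ∈ edgeList l) : x ∈ l ∧ y ∈ l :=
  ⟨(List.of_mem_zip h).1, List.mem_of_mem_tail (List.of_mem_zip h).2⟩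

lemma segment_inter_subset_of_det3 {a b z d p q : Pt} (hd : det3 a b d = 0) (hz : det3 a b z ≠ 0)
    (hp : det3 a b z * det3 a b p ≤ 0) (hq : det3 a b z * det3 a b q ≤ 0) :
    segment ℝ z d ∩ segment ℝ p q ⊆ {d} := by
  rintro x ⟨⟨α, β, hα, hβ, hαβ, rfl⟩, ⟨s, t, hs, ht, hst, hx⟩⟩
  have hx' := congrArg (det3 a b) hx
  rw [det3_add_smul hst, det3_add_smul hαβ, hd] at hx'
  have hα0 : α * (det3 a b z * det3 a b z) ≤ 0 := by
    linear_combination (-det3 a b z) * hx' + s * hp + t * hq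
  obtain rfl : α = 0 := le_antisymm (nonpos_of_mul_nonpos_left hα0 (mul_self_pos.mpr hz)) hα
  obtain rfl : β = 1 := by linarith
  simp

lemma PlanePath.head_mem_of_mem_segment {S : Finset Pt} {d : Pt} {t : List Pt}
    (hl : PlanePath S (d :: t)) {a b : Pt} (hab : (a, b) ∈ edgeList (d :: t))
    (hd : d ∈ segment ℝ a b) : d = a ∨ d = b := by
  obtain _ | ⟨d', t'⟩ := t
  · simp [edgeList] at hab
  by_cases h : (d, d') = (a, b)
  · exact .inl (Prod.mk.inj h).1
  have := hl.2.2 (d, d') (by simp) (a, b) hab h ⟨left_mem_segment ℝ d d', hd⟩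
  simpa using this.2

lemma PlanePath.cons {S : Finset Pt} {z d a b : Pt} {t : List Pt} (hl : PlanePath S (d :: t))
    (hd : det3 a b d = 0) (hz : det3 a b z ≠ 0) (hS : ∀ p ∈ S, det3 a b z * det3 a b p ≤ 0) :
    PlanePath (insert z S) (z :: d :: t) := by
  obtain ⟨hnd, hS', hpl⟩ := hl
  have hzS : z ∉ S := fun h => (hS z h).not_gt (mul_self_pos.mpr hz)
  have hmeet (e : Pt × Pt) (he : e ∈ edgeList (d :: t)) :
      segment ℝ z d ∩ segment ℝ e.1 e.2 ⊆ ({z, d} : Set Pt) ∩ {e.1, e.2} := by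
    have hmem := mem_of_mem_edgeList he
    intro x hx
    obtain rfl := segment_inter_subset_of_det3 hd hz (hS _ (hS' ▸ List.mem_toFinset.mpr hmem.1))
      (hS _ (hS' ▸ List.mem_toFinset.mpr hmem.2)) hx
    refine ⟨by simp, ?_⟩
    rcases PlanePath.head_mem_of_mem_segment ⟨hnd, hS', hpl⟩ he hx.2 with h | h <;> simp [h]
  refine ⟨List.nodup_cons.mpr ⟨fun h => hzS (hS' ▸ List.mem_toFinset.mpr h), hnd⟩,
    by rw [List.toFinset_cons, hS'], ?_⟩
  simp only [edgeList_cons_cons, List.mem_cons]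
  rintro e (rfl | he) e' (rfl | he') hne
  · exact absurd rfl hne
  · exact hmeet e' he'
  · rw [Set.inter_comm, Set.inter_comm {e.1, e.2}]
    exact hmeet e he
  · exact hpl e he e' he' hne

lemma planePath_pair {a b : Pt} (h : a ≠ b) : PlanePath {a, b} [a, b] :=
  ⟨by simp [h], by simp, by simp [edgeList]⟩

lemma isHullEdge_of_det3_mul_neg {S : Finset Pt} {a b z : Pt} (ha : a ∈ S) (hb : b ∈ S)
    (hab : a ≠ b) (hz : det3 a b z ≠ 0)
    (h : ∀ p ∈ S, p ≠ a → p ≠ b → det3 a b z * det3 a b p < 0) : IsHullEdge S a b := by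
  refine ⟨ha, hb, hab, ?_⟩
  rcases hz.lt_or_gt with hz | hz
  · exact .inl fun p hp hpa hpb => pos_of_mul_neg_right (h p hp hpa hpb) hz.le
  · exact .inr fun p hp hpa hpb => neg_of_mul_neg_right (h p hp hpa hpb) hz.le

def AlternatesBetween (D U : Finset Pt) (l : List Pt) : Prop :=
  ∀ e ∈ edgeList l, (e.1 ∈ D ∧ e.2 ∈ U) ∨ (e.1 ∈ U ∧ e.2 ∈ D)

lemma AlternatesBetween.mono {D D' U U' : Finset Pt} {l : List Pt} (h : AlternatesBetween D U l)
    (hD : D ⊆ D') (hU : U ⊆ U') : AlternatesBetween D' U' l := fun e he =>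
  (h e he).imp (fun h => ⟨hD h.1, hU h.2⟩) (fun h => ⟨hU h.1, hD h.2⟩)

lemma AlternatesBetween.cons {D U : Finset Pt} {z d : Pt} {t : List Pt}
    (h : AlternatesBetween U D (d :: t)) (hz : z ∈ U) (hd : d ∈ D) :
    AlternatesBetween D U (z :: d :: t) := by
  simp only [AlternatesBetween, edgeList_cons_cons, List.mem_cons, forall_eq_or_imp]
  exact ⟨.inr ⟨hz, hd⟩, fun e he => (h e he).symm⟩

theorem exists_planePath_alternatesBetween (D U : Finset Pt) (f : Pt →ₗ[ℝ] ℝ) (c : ℝ)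
    (hD : ∀ p ∈ D, f p < c) (hU : ∀ q ∈ U, c < f q) (hgp : GenPos (D ∪ U))
    (hcard₁ : D.card ≤ U.card) (hcard₂ : U.card ≤ D.card + 1)
    (z w : Pt) (hz : z ∈ U) (hw : w ∈ D) (hzw : IsHullEdge (D ∪ U) z w) :
    ∃ l : List Pt, PlanePath (D ∪ U) l ∧ l.head? = some z ∧ AlternatesBetween D U l := by
  by_cases hU' : (U.erase z).Nonempty
  swap
  · obtain rfl : U = {z} := by
      rw [Finset.not_nonempty_iff_eq_empty, Finset.erase_eq_empty_iff] at hU'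
      exact hU'.resolve_left (Finset.ne_empty_of_mem hz)
    obtain rfl : D = {w} := Finset.eq_singleton_iff_unique_mem.mpr
      ⟨hw, fun x hx => Finset.card_le_one.mp (by simpa using hcard₁) x hx w hw⟩
    refine ⟨[z, w], Finset.union_comm {w} {z} ▸ planePath_pair hzw.2.2.1, rfl, ?_⟩
    simp [AlternatesBetween, edgeList]
  obtain ⟨d, hd, u, hu, hdetz, hside⟩ := exists_line_isolating_of_isHullEdge hD hU hgp hz hw hzw hU'
  have hdu : d ≠ u := by rintro rfl; linarith [hD d hd, hU d (Finset.mem_of_mem_erase hu)]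
  have hrest : (D ∪ U).erase z = U.erase z ∪ D := by
    rw [Finset.erase_union_distrib, Finset.erase_eq_of_notMem fun h => (hD z h).not_gt (hU z hz),
      Finset.union_comm]
  have hside' (p : Pt) (hp : p ∈ (D ∪ U).erase z) (hpd : p ≠ d) (hpu : p ≠ u) :
      det3 d u z * det3 d u p < 0 :=
    hside p (Finset.mem_of_mem_erase hp) (Finset.ne_of_mem_erase hp) hpd hpu
  have hdu_edge : IsHullEdge (U.erase z ∪ D) d u := hrest ▸ isHullEdge_of_det3_mul_neg
    (hrest ▸ Finset.mem_union_right _ hd) (hrest ▸ Finset.mem_union_left _ hu) hdu hdetz hside'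
  obtain ⟨l, hl, hhead, halt⟩ := exists_planePath_alternatesBetween (U.erase z) D (-f) (-c)
    (fun p hp => by simpa using hU p (Finset.mem_of_mem_erase hp))
    (fun p hp => by simpa using hD p hp) (hgp.mono (hrest ▸ Finset.erase_subset z _))
    (by rw [Finset.card_erase_of_mem hz]; omega) (by rw [Finset.card_erase_of_mem hz]; omega)
    d u hd hu hdu_edge
  obtain ⟨t, rfl⟩ := List.head?_eq_some_iff.mp hhead
  refine ⟨z :: d :: t, ?_, rfl, (halt.mono (Finset.erase_subset z U) subset_rfl).cons hz hd⟩
  rw [← Finset.insert_erase (Finset.mem_union_right D hz)]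
  refine (hrest ▸ hl).cons (det3_self_left d u) hdetz fun p hp => ?_
  by_cases hpd : p = d
  · simp [hpd]
  by_cases hpu : p = u
  · simp [hpu]
  exact (hside' p hp hpd hpu).le
termination_by D.card + U.card
decreasing_by
  have := Finset.card_erase_lt_of_mem hz
  omega

/-- For linearly separated sets `S_down`, `S_up` with
`|S_down| ≤ |S_up| ≤ |S_down| + 1`, and `z ∈ S_up` a hull vertex of the union adjacent on
the hull boundary to a vertex of `S_down`, there is a plane Hamiltonian path on the union
starting at `z` all of whose edges go between `S_down` and `S_up`. -/
theorem stmt_6 (Sdown Sup : Finset Pt)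
    (hgp : GenPos (Sdown ∪ Sup))
    (hcard₁ : Sdown.card ≤ Sup.card) (hcard₂ : Sup.card ≤ Sdown.card + 1)
    (hsep : ∃ (f : Pt →ₗ[ℝ] ℝ) (c : ℝ), (∀ p ∈ Sdown, f p < c) ∧ (∀ q ∈ Sup, c < f q))
    (z : Pt) (hz : z ∈ Sup)
    (hzadj : ∃ w ∈ Sdown, IsHullEdge (Sdown ∪ Sup) z w) :
    ∃ l : List Pt, PlanePath (Sdown ∪ Sup) l ∧ l.head? = some z ∧
      ∀ e ∈ edgeList l, (e.1 ∈ Sdown ∧ e.2 ∈ Sup) ∨ (e.1 ∈ Sup ∧ e.2 ∈ Sdown) := by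
  obtain ⟨f, c, hD, hU⟩ := hsep
  obtain ⟨w, hw, hzw⟩ := hzadj
  exact exists_planePath_alternatesBetween Sdown Sup f c hD hU hgp hcard₁ hcard₂ z w hz hw hzw
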